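/- arXiv:math/0212407 — 2 statements merged into one kernel-verified Lean document; each statement's English description precedes it below -/
import Mathlib

section
/- A smooth embedded closed plane curve evolving by curvature flow must develop a singularity (the smooth flow cannot exist) by time A(0)/(2π), where A(0) is the initially enclosed area. -/
open Real

lemma hasDerivAt_euclid_apply {f : ℝ → EuclideanSpace ℝ (Fin 2)} {f' : EuclideanSpace ℝ (Fin 2)}
    {x : ℝ} (h : HasDerivAt f f' x) (i : Fin 2) : HasDerivAt (fun u => f u i) (f' i) x := by
  exact (EuclideanSpace.proj (𝕜 := ℝ) i).hasFDerivAt.comp_hasDerivAt x h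

/-- A smooth embedded closed plane curve evolving by the curvature flow must develop a
singularity by time `A(0)/(2π)`: a smooth embedded curvature flow on `[0, T]` forces
`T ≤ A(0)/(2π)`, where `A` is the enclosed (shoelace) area. -/
theorem curve_shortening_singularity_by_area_time (T : ℝ) (hT : 0 ≤ T)
    (γ : ℝ → ℝ → EuclideanSpace ℝ (Fin 2))
    (hγ : ContDiff ℝ (⊤ : ℕ∞) (fun p : ℝ × ℝ => γ p.1 p.2))
    (hper : ∀ t u, γ t (u + 2 * π) = γ t u)
    (γu : ℝ → ℝ → EuclideanSpace ℝ (Fin 2))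
    (hγu : ∀ t u, γu t u = deriv (γ t) u)
    (himm : ∀ t ∈ Set.Icc 0 T, ∀ u, γu t u ≠ 0)
    -- embeddedness: the curve is simple at each time in `[0, T]`
    (hemb : ∀ t ∈ Set.Icc 0 T, Set.InjOn (γ t) (Set.Ico 0 (2 * π)))
    -- the curvature vector `k = ∂²γ/∂s²`
    (k : ℝ → ℝ → EuclideanSpace ℝ (Fin 2))
    (hk : ∀ t u, k t u =
      (1 / ‖γu t u‖) • deriv (fun w => (1 / ‖γu t w‖) • γu t w) u)
    -- the curve evolves smoothly by the curvature flow on `[0, T]`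
    (hflow : ∀ t ∈ Set.Icc 0 T, ∀ u, HasDerivAt (fun s => γ s u) (k t u) t)
    -- positive orientation: the total signed curvature is `2π` (turning-number theorem)
    (hturn : ∀ t ∈ Set.Icc 0 T, (∫ u in (0:ℝ)..(2 * π),
        ((γu t u 0 * deriv (fun w => γu t w 1) u -
          γu t u 1 * deriv (fun w => γu t w 0) u) / ‖γu t u‖ ^ 3) * ‖γu t u‖) = 2 * π)
    -- the enclosed area, via the shoelace formula; it is positive for an embedded curve
    (A : ℝ → ℝ)
    (hA : ∀ t, A t = (1 / 2) * ∫ u in (0:ℝ)..(2 * π),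
        (γ t u 0 * γu t u 1 - γ t u 1 * γu t u 0))
    (hApos : ∀ t ∈ Set.Icc 0 T, 0 < A t) :
    T ≤ A 0 / (2 * π) := by
  set F : ℝ × ℝ → EuclideanSpace ℝ (Fin 2) := fun p => γ p.1 p.2 with hFdef
  -- partial derivative operators
  set Ft : ℝ × ℝ → EuclideanSpace ℝ (Fin 2) := fun p => fderiv ℝ F p ((1:ℝ), (0:ℝ)) with hFtdef
  set Fu : ℝ × ℝ → EuclideanSpace ℝ (Fin 2) := fun p => fderiv ℝ F p ((0:ℝ), (1:ℝ)) with hFudef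
  have hF1 : ContDiff ℝ (⊤ : ℕ∞) (fderiv ℝ F) := hγ.fderiv_right (by simp)
  have hFt : ContDiff ℝ (⊤ : ℕ∞) Ft := hF1.clm_apply contDiff_const
  have hFu : ContDiff ℝ (⊤ : ℕ∞) Fu := hF1.clm_apply contDiff_const
  -- partial derivatives along lines for any smooth function
  have lineu : ∀ (G : ℝ × ℝ → EuclideanSpace ℝ (Fin 2)), ContDiff ℝ (⊤ : ℕ∞) G → ∀ t u : ℝ,
      HasDerivAt (fun w => G (t, w)) (fderiv ℝ G (t, u) (0, 1)) u := by
    intro G hG t u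
    have h1 : HasDerivAt (fun w => ((t, w) : ℝ × ℝ)) ((0:ℝ), (1:ℝ)) u :=
      (hasDerivAt_const u t).prodMk (hasDerivAt_id u)
    exact ((hG.differentiable (by simp) (t, u)).hasFDerivAt).comp_hasDerivAt u h1
  have linet : ∀ (G : ℝ × ℝ → EuclideanSpace ℝ (Fin 2)), ContDiff ℝ (⊤ : ℕ∞) G → ∀ t u : ℝ,
      HasDerivAt (fun s => G (s, u)) (fderiv ℝ G (t, u) (1, 0)) t := by
    intro G hG t u
    have h1 : HasDerivAt (fun s => ((s, u) : ℝ × ℝ)) ((1:ℝ), (0:ℝ)) t :=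
      (hasDerivAt_id t).prodMk (hasDerivAt_const t u)
    exact ((hG.differentiable (by simp) (t, u)).hasFDerivAt).comp_hasDerivAt t h1
  have hlineu : ∀ t u, HasDerivAt (fun w => F (t, w)) (Fu (t, u)) u := lineu F hγ
  have hlinet : ∀ t u, HasDerivAt (fun s => F (s, u)) (Ft (t, u)) t := linet F hγ
  -- second partials
  set Fut : ℝ × ℝ → EuclideanSpace ℝ (Fin 2) := fun p => fderiv ℝ Ft p ((0:ℝ), (1:ℝ)) with hFutdef
  set Fuu : ℝ × ℝ → EuclideanSpace ℝ (Fin 2) := fun p => fderiv ℝ Fu p ((0:ℝ), (1:ℝ)) with hFuudef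
  have hFut : ContDiff ℝ (⊤ : ℕ∞) Fut := (hFt.fderiv_right (by simp)).clm_apply contDiff_const
  have hFut_line : ∀ t u, HasDerivAt (fun w => Ft (t, w)) (Fut (t, u)) u := lineu Ft hFt
  have hFuu_line : ∀ t u, HasDerivAt (fun w => Fu (t, w)) (Fuu (t, u)) u := lineu Fu hFu
  -- Clairaut: ∂t Fu = ∂u Ft
  have hclairaut : ∀ t u, HasDerivAt (fun s => Fu (s, u)) (Fut (t, u)) t := by
    intro t u
    have base := linet Fu hFu t u
    have hdiff : ∀ y, HasFDerivAt F (fderiv ℝ F y) y := fun y =>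
      (hγ.differentiable (by simp) y).hasFDerivAt
    have hD : HasFDerivAt (fderiv ℝ F) (fderiv ℝ (fderiv ℝ F) (t, u)) (t, u) :=
      (hF1.differentiable (by simp) (t, u)).hasFDerivAt
    have hsym := second_derivative_symmetric hdiff hD
    have e1 : ∀ (v : ℝ × ℝ), HasFDerivAt (fun q => fderiv ℝ F q v)
        ((ContinuousLinearMap.apply ℝ (EuclideanSpace ℝ (Fin 2)) v).comp (fderiv ℝ (fderiv ℝ F) (t, u))) (t, u) :=
      fun v => (ContinuousLinearMap.apply ℝ (EuclideanSpace ℝ (Fin 2)) v).hasFDerivAt.comp (t, u) hD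
    have key : fderiv ℝ Fu (t, u) ((1:ℝ), (0:ℝ)) = Fut (t, u) := by
      calc fderiv ℝ Fu (t, u) ((1:ℝ), (0:ℝ))
          = fderiv ℝ (fun q => fderiv ℝ F q ((0:ℝ),(1:ℝ))) (t, u) ((1:ℝ), (0:ℝ)) := by
            simp only [hFudef]
        _ = fderiv ℝ (fderiv ℝ F) (t, u) ((1:ℝ), (0:ℝ)) ((0:ℝ), (1:ℝ)) := by
            rw [(e1 _).fderiv]; rfl
        _ = fderiv ℝ (fderiv ℝ F) (t, u) ((0:ℝ), (1:ℝ)) ((1:ℝ), (0:ℝ)) := hsym _ _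
        _ = fderiv ℝ (fun q => fderiv ℝ F q ((1:ℝ),(0:ℝ))) (t, u) ((0:ℝ), (1:ℝ)) := by
            rw [(e1 _).fderiv]; rfl
        _ = Fut (t, u) := by simp only [hFutdef, hFtdef]
    rwa [key] at base
  -- γu is Fu; Ft is k on [0,T]
  have hγu' : ∀ t u, γu t u = Fu (t, u) := by
    intro t u
    rw [hγu]
    have h := (hlineu t u).deriv
    simp only [hFdef] at h
    exact h
  have hFtk : ∀ t ∈ Set.Icc (0:ℝ) T, ∀ u, Ft (t, u) = k t u := by
    intro t ht u
    exact (hlinet t u).unique (hflow t ht u)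
  -- periodicity of F, Ft in u
  have hFper : ∀ t u, F (t, u + 2 * π) = F (t, u) := fun t u => hper t u
  have hFtper : ∀ t u, Ft (t, u + 2 * π) = Ft (t, u) := by
    intro t u
    have h1 := hlinet t (u + 2 * π)
    have h2 : (fun s => F (s, u + 2 * π)) = fun s => F (s, u) := by
      funext s; exact hper s u
    rw [h2] at h1
    exact h1.unique (hlinet t u)
  -- scalar integrands
  set c : ℝ × ℝ → ℝ := fun p => F p 0 * Fu p 1 - F p 1 * Fu p 0 with hcdef
  set ct : ℝ × ℝ → ℝ := fun p =>
    (Ft p 0 * Fu p 1 - Ft p 1 * Fu p 0) + (F p 0 * Fut p 1 - F p 1 * Fut p 0) with hctdef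
  have compCont : ∀ (G : ℝ × ℝ → EuclideanSpace ℝ (Fin 2)), ContDiff ℝ (⊤ : ℕ∞) G → ∀ i : Fin 2,
      Continuous fun p => G p i := by
    intro G hG i
    exact (EuclideanSpace.proj (𝕜 := ℝ) i).continuous.comp hG.continuous
  have hcCont : Continuous c :=
    ((compCont F hγ 0).mul (compCont Fu hFu 1)).sub ((compCont F hγ 1).mul (compCont Fu hFu 0))
  have hctCont : Continuous ct :=
    (((compCont Ft hFt 0).mul (compCont Fu hFu 1)).sub
      ((compCont Ft hFt 1).mul (compCont Fu hFu 0))).add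
    (((compCont F hγ 0).mul (compCont Fut hFut 1)).sub
      ((compCont F hγ 1).mul (compCont Fut hFut 0)))
  -- time derivative of the integrand
  have hct : ∀ t u, HasDerivAt (fun s => c (s, u)) (ct (t, u)) t := by
    intro t u
    have h0 := hasDerivAt_euclid_apply (hlinet t u) 0
    have h1 := hasDerivAt_euclid_apply (hlinet t u) 1
    have g0 := hasDerivAt_euclid_apply (hclairaut t u) 0
    have g1 := hasDerivAt_euclid_apply (hclairaut t u) 1
    have := (h0.mul g1).sub (h1.mul g0)
    refine this.congr_deriv ?_
    simp only [hctdef]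
    ring
  -- derivative of the area integral
  have hAderiv : ∀ t₀ : ℝ, HasDerivAt (fun t => ∫ u in (0:ℝ)..(2 * π), c (t, u))
      (∫ u in (0:ℝ)..(2 * π), ct (t₀, u)) t₀ := by
    intro t₀
    have hcomp : IsCompact ((Set.Icc (t₀ - 1) (t₀ + 1)) ×ˢ (Set.uIcc (0:ℝ) (2 * π))) :=
      isCompact_Icc.prod isCompact_uIcc
    obtain ⟨C, hC⟩ := hcomp.exists_bound_of_continuousOn hctCont.continuousOn
    have key := intervalIntegral.hasDerivAt_integral_of_dominated_loc_of_deriv_le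
      (F := fun t u => c (t, u)) (F' := fun t u => ct (t, u)) (x₀ := t₀)
      (a := (0:ℝ)) (b := 2 * π) (bound := fun _ => C) (s := Metric.ball t₀ 1) (μ := MeasureTheory.volume) (Metric.ball_mem_nhds t₀ one_pos)
      (Filter.Eventually.of_forall fun x =>
        (hcCont.comp (continuous_const.prodMk continuous_id)).aestronglyMeasurable)
      ((hcCont.comp (continuous_const.prodMk continuous_id)).intervalIntegrable _ _)
      ((hctCont.comp (continuous_const.prodMk continuous_id)).aestronglyMeasurable)
      (Filter.Eventually.of_forall ?_) intervalIntegrable_const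
      (Filter.Eventually.of_forall ?_)
    · exact key.2
    · intro u hu x hx
      apply hC
      constructor
      · have : |x - t₀| < 1 := by simpa [Real.dist_eq] using hx
        constructor <;> [linarith [abs_lt.1 this |>.1]; linarith [abs_lt.1 this |>.2]]
      · exact Set.uIoc_subset_uIcc hu
    · intro u hu x hx
      exact hct x u
  -- A as the integral of c
  have hAeq : ∀ t, A t = (1 / 2) * ∫ u in (0:ℝ)..(2 * π), c (t, u) := by
    intro t
    rw [hA]
    congr 1
    apply intervalIntegral.integral_congr
    intro u _
    simp only [hcdef, hγu']
    rfl
  -- the integral of ct is -4π on [0,T]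
  have hctval : ∀ t ∈ Set.Icc (0:ℝ) T, (∫ u in (0:ℝ)..(2 * π), ct (t, u)) = -(4 * π) := by
    intro t ht
    -- integration by parts via the periodic function g
    set g : ℝ → ℝ := fun u => F (t, u) 0 * Ft (t, u) 1 - F (t, u) 1 * Ft (t, u) 0 with hgdef
    set g' : ℝ → ℝ := fun u =>
      (Fu (t, u) 0 * Ft (t, u) 1 - Fu (t, u) 1 * Ft (t, u) 0) +
      (F (t, u) 0 * Fut (t, u) 1 - F (t, u) 1 * Fut (t, u) 0) with hg'def
    have hg : ∀ u, HasDerivAt g (g' u) u := by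
      intro u
      have h0 := hasDerivAt_euclid_apply (hlineu t u) 0
      have h1 := hasDerivAt_euclid_apply (hlineu t u) 1
      have p0 := hasDerivAt_euclid_apply (hFut_line t u) 0
      have p1 := hasDerivAt_euclid_apply (hFut_line t u) 1
      have := (h0.mul p1).sub (h1.mul p0)
      refine this.congr_deriv ?_
      simp only [hg'def]
      ring
    have hg'cont : Continuous g' := by
      have := ((((compCont Fu hFu 0).mul (compCont Ft hFt 1)).sub
        ((compCont Fu hFu 1).mul (compCont Ft hFt 0))).add
        (((compCont F hγ 0).mul (compCont Fut hFut 1)).sub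
        ((compCont F hγ 1).mul (compCont Fut hFut 0))))
      exact this.comp (continuous_const.prodMk continuous_id)
    have hibp : (∫ u in (0:ℝ)..(2 * π), g' u) = g (2 * π) - g 0 := by
      apply intervalIntegral.integral_eq_sub_of_hasDerivAt (fun u _ => hg u)
      exact hg'cont.intervalIntegrable _ _
    have hper0 : g (2 * π) = g 0 := by
      have h1 : F (t, 2 * π) = F (t, 0) := by
        have := hFper t 0; rwa [zero_add] at this
      have h2 : Ft (t, 2 * π) = Ft (t, 0) := by
        have := hFtper t 0; rwa [zero_add] at this
      simp only [hgdef, h1, h2]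
    have hzero : (∫ u in (0:ℝ)..(2 * π), g' u) = 0 := by rw [hibp, hper0]; ring
    -- split the integral of ct
    have hi1 : IntervalIntegrable (fun u => Ft (t, u) 0 * Fu (t, u) 1 - Ft (t, u) 1 * Fu (t, u) 0)
        MeasureTheory.volume 0 (2 * π) := by
      apply Continuous.intervalIntegrable
      exact ((((compCont Ft hFt 0).mul (compCont Fu hFu 1)).sub
        ((compCont Ft hFt 1).mul (compCont Fu hFu 0)))).comp
        (continuous_const.prodMk continuous_id)
    have hi2 : IntervalIntegrable (fun u => F (t, u) 0 * Fut (t, u) 1 - F (t, u) 1 * Fut (t, u) 0)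
        MeasureTheory.volume 0 (2 * π) := by
      apply Continuous.intervalIntegrable
      exact ((((compCont F hγ 0).mul (compCont Fut hFut 1)).sub
        ((compCont F hγ 1).mul (compCont Fut hFut 0)))).comp
        (continuous_const.prodMk continuous_id)
    have hi3 : IntervalIntegrable (fun u => Fu (t, u) 0 * Ft (t, u) 1 - Fu (t, u) 1 * Ft (t, u) 0)
        MeasureTheory.volume 0 (2 * π) := by
      apply Continuous.intervalIntegrable
      exact ((((compCont Fu hFu 0).mul (compCont Ft hFt 1)).sub
        ((compCont Fu hFu 1).mul (compCont Ft hFt 0)))).comp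
        (continuous_const.prodMk continuous_id)
    have hsplit : (∫ u in (0:ℝ)..(2 * π), ct (t, u)) =
        (∫ u in (0:ℝ)..(2 * π), (Ft (t, u) 0 * Fu (t, u) 1 - Ft (t, u) 1 * Fu (t, u) 0)) +
        (∫ u in (0:ℝ)..(2 * π), (F (t, u) 0 * Fut (t, u) 1 - F (t, u) 1 * Fut (t, u) 0)) := by
      rw [← intervalIntegral.integral_add hi1 hi2]
    have hsplit2 : (∫ u in (0:ℝ)..(2 * π), g' u) =
        (∫ u in (0:ℝ)..(2 * π), (Fu (t, u) 0 * Ft (t, u) 1 - Fu (t, u) 1 * Ft (t, u) 0)) +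
        (∫ u in (0:ℝ)..(2 * π), (F (t, u) 0 * Fut (t, u) 1 - F (t, u) 1 * Fut (t, u) 0)) := by
      rw [← intervalIntegral.integral_add hi3 hi2]
    -- the cross-term integral equals -2π
    have hcross : (∫ u in (0:ℝ)..(2 * π),
        (Ft (t, u) 0 * Fu (t, u) 1 - Ft (t, u) 1 * Fu (t, u) 0)) = -(2 * π) := by
      have hpt : ∀ u : ℝ, Ft (t, u) 0 * Fu (t, u) 1 - Ft (t, u) 1 * Fu (t, u) 0 =
          -(((γu t u 0 * deriv (fun w => γu t w 1) u -
            γu t u 1 * deriv (fun w => γu t w 0) u) / ‖γu t u‖ ^ 3) * ‖γu t u‖) := by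
        intro u
        have hr : ‖γu t u‖ ≠ 0 := norm_ne_zero_iff.2 (himm t ht u)
        -- derivative of the normalized tangent
        have hNdiff : DifferentiableAt ℝ (fun w => ‖Fu (t, w)‖) u := by
          have h1 : DifferentiableAt ℝ (fun w => Fu (t, w)) u :=
            (hFuu_line t u).differentiableAt
          have h2 : Fu (t, u) ≠ 0 := by rw [← hγu']; exact himm t ht u
          exact h1.norm ℝ h2
        have h2 : Fu (t, u) ≠ 0 := by rw [← hγu']; exact himm t ht u
        have hd0 : deriv (fun w => γu t w 0) u = Fuu (t, u) 0 := by
          have hh := (hasDerivAt_euclid_apply (hFuu_line t u) 0).deriv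
          rw [show (fun w => γu t w 0) = fun w => Fu (t, w) 0 from
            funext fun w => by rw [hγu']]
          exact hh
        have hd1 : deriv (fun w => γu t w 1) u = Fuu (t, u) 1 := by
          have hh := (hasDerivAt_euclid_apply (hFuu_line t u) 1).deriv
          rw [show (fun w => γu t w 1) = fun w => Fu (t, w) 1 from
            funext fun w => by rw [hγu']]
          exact hh
        have hinv : DifferentiableAt ℝ (fun w => 1 / ‖Fu (t, w)‖) u := by
          simp only [one_div]
          exact hNdiff.inv (norm_ne_zero_iff.2 h2)
        set ρ := deriv (fun w => 1 / ‖Fu (t, w)‖) u with hρdef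
        have hTd : HasDerivAt (fun w => (1 / ‖Fu (t, w)‖) • Fu (t, w))
            ((1 / ‖Fu (t, u)‖) • Fuu (t, u) + ρ • Fu (t, u)) u :=
          hinv.hasDerivAt.smul (hFuu_line t u)
        have hkval : k t u = (1 / ‖γu t u‖) •
            ((1 / ‖Fu (t, u)‖) • Fuu (t, u) + ρ • Fu (t, u)) := by
          rw [hk]
          congr 1
          rw [show (fun w => (1 / ‖γu t w‖) • γu t w) =
            fun w => (1 / ‖Fu (t, w)‖) • Fu (t, w) from funext fun w => by rw [hγu']]
          exact hTd.deriv
        have hFtval : Ft (t, u) = k t u := hFtk t ht u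
        rw [hFtval, hkval, hd0, hd1, hγu' t u]
        set r := ‖Fu (t, u)‖ with hrdef
        have hr' : r ≠ 0 := norm_ne_zero_iff.2 h2
        simp only [PiLp.smul_apply, PiLp.add_apply, smul_eq_mul]
        field_simp
        ring
      rw [intervalIntegral.integral_congr (fun u _ => hpt u),
        intervalIntegral.integral_neg, hturn t ht]
    rw [hsplit]
    have h2nd : (∫ u in (0:ℝ)..(2 * π),
        (F (t, u) 0 * Fut (t, u) 1 - F (t, u) 1 * Fut (t, u) 0)) = -(2 * π) := by
      have e : (∫ u in (0:ℝ)..(2 * π),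
          (Fu (t, u) 0 * Ft (t, u) 1 - Fu (t, u) 1 * Ft (t, u) 0)) =
          -(∫ u in (0:ℝ)..(2 * π),
          (Ft (t, u) 0 * Fu (t, u) 1 - Ft (t, u) 1 * Fu (t, u) 0)) := by
        rw [← intervalIntegral.integral_neg]
        apply intervalIntegral.integral_congr
        intro u _
        ring
      have := hzero
      rw [hsplit2, e, hcross] at this
      linarith
    rw [hcross, h2nd]
    ring
  -- A has derivative -2π on [0,T]
  have hA' : ∀ t ∈ Set.Icc (0:ℝ) T, HasDerivAt A (-(2 * π)) t := by
    intro t ht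
    have h1 : HasDerivAt (fun s => (1 / 2) * ∫ u in (0:ℝ)..(2 * π), c (s, u))
        ((1 / 2) * ∫ u in (0:ℝ)..(2 * π), ct (t, u)) t := (hAderiv t).const_mul _
    have h2 : A = fun s => (1 / 2) * ∫ u in (0:ℝ)..(2 * π), c (s, u) := funext hAeq
    rw [h2]
    convert h1 using 1
    rw [hctval t ht]
    ring
  -- conclude
  have hB : ∀ x ∈ Set.Icc (0:ℝ) T, A x + 2 * π * x = A 0 + 2 * π * 0 := by
    have hcont : ContinuousOn (fun x => A x + 2 * π * x) (Set.Icc 0 T) := by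
      intro x hx
      exact (((hA' x hx).add (((hasDerivAt_id x).const_mul (2 * π)))).continuousAt).continuousWithinAt
    have hderiv : ∀ x ∈ Set.Ico (0:ℝ) T, HasDerivWithinAt (fun x => A x + 2 * π * x) 0 (Set.Ici x) x := by
      intro x hx
      have := (hA' x ⟨hx.1, le_of_lt hx.2⟩).add (((hasDerivAt_id x).const_mul (2 * π)))
      have h0 : -(2 * π) + 2 * π * 1 = 0 := by ring
      rw [h0] at this
      exact this.hasDerivWithinAt
    exact constant_of_has_deriv_right_zero hcont hderiv
  have hBT := hB T ⟨hT, le_refl T⟩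
  have hAT := hApos T ⟨hT, le_refl T⟩
  have hπ : (0:ℝ) < 2 * π := by positivity
  rw [le_div_iff₀ hπ]
  nlinarith
end

section
/- Under the affine flow, in which a plane curve moves in the direction of its curvature vector with speed equal to the cube root of its curvature, an ellipse remains an ellipse of the same eccentricity: the family of curves c(t,θ) = λ(t)·(a cos θ, b sin θ), with λ(t) = (1 − (4/3)(ab)^{-2/3} t)^{3/4}, has normal velocity equal to κ^{1/3} times the unit normal pointing in the direction of the curvature vector. -/
/-!
The support function of the ellipse `x(θ) = (α cos θ, β sin θ)` is
`-⟪x, N⟫ = αβ / √(α² sin² θ + β² cos² θ) = (αβ)^{2/3} κ^{1/3}`. For `c(t,·) = λ(t)·x₀` the velocity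
`λ' x₀ = (λ'/λ)·c` therefore has normal component `-(λ'/λ)(λ²ab)^{2/3} κ^{1/3}`, and the flow
equation reduces to the ODE `λ' = -(ab)^{-2/3} λ^{-1/3}`, solved by
`λ(t) = (1 - (4/3)(ab)^{-2/3} t)^{3/4}` as long as the base stays positive.
-/

open Real

noncomputable section

namespace Ellipse

def point (α β θ : ℝ) : EuclideanSpace ℝ (Fin 2) := WithLp.toLp 2 ![α * cos θ, β * sin θ]

def inwardNormal (α β θ : ℝ) : EuclideanSpace ℝ (Fin 2) :=
  (-(1 / √(β ^ 2 * cos θ ^ 2 + α ^ 2 * sin θ ^ 2))) • WithLp.toLp 2 ![β * cos θ, α * sin θ]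

def curvature (α β θ : ℝ) : ℝ :=
  α * β / (α ^ 2 * sin θ ^ 2 + β ^ 2 * cos θ ^ 2) ^ ((3 : ℝ) / 2)

theorem point_mul_mul (r α β θ : ℝ) : point (r * α) (r * β) θ = r • point α β θ := by
  ext i
  fin_cases i <;> simp [point, mul_assoc]

theorem inner_point_swap (α β θ : ℝ) :
    inner ℝ (point α β θ) (WithLp.toLp 2 ![β * cos θ, α * sin θ]) = α * β := by
  simp only [point, PiLp.inner_apply, Fin.sum_univ_two, Matrix.cons_val_zero,
    Matrix.cons_val_one, RCLike.inner_apply, conj_trivial]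
  linear_combination α * β * sin_sq_add_cos_sq θ

theorem sq_mul_sin_sq_add_sq_mul_cos_sq_pos {α β : ℝ} (hα : α ≠ 0) (hβ : β ≠ 0) (θ : ℝ) :
    0 < α ^ 2 * sin θ ^ 2 + β ^ 2 * cos θ ^ 2 := by
  rcases eq_or_ne (sin θ) 0 with hs | hs
  · have hc : cos θ ≠ 0 := fun hc => by simpa [hs, hc] using sin_sq_add_cos_sq θ
    simp only [hs]
    positivity
  · have : 0 < α ^ 2 * sin θ ^ 2 := by positivity
    positivity

theorem cbrt_div_rpow_three_halves {x Q : ℝ} (hx : 0 ≤ x) (hQ : 0 ≤ Q) :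
    (x / Q ^ ((3 : ℝ) / 2)) ^ ((1 : ℝ) / 3) = x ^ ((1 : ℝ) / 3) / √Q := by
  rw [div_rpow hx (by positivity), ← rpow_mul hQ, sqrt_eq_rpow]
  norm_num

theorem inner_point_inwardNormal {α β : ℝ} (hα : 0 < α) (hβ : 0 < β) (θ : ℝ) :
    inner ℝ (point α β θ) (inwardNormal α β θ)
      = -((α * β) ^ ((2 : ℝ) / 3) * curvature α β θ ^ ((1 : ℝ) / 3)) := by
  have hQ := sq_mul_sin_sq_add_sq_mul_cos_sq_pos hα.ne' hβ.ne' θ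
  have hαβ : 0 < α * β := mul_pos hα hβ
  rw [inwardNormal, inner_smul_right, inner_point_swap, curvature,
    cbrt_div_rpow_three_halves hαβ.le hQ.le, add_comm (α ^ 2 * _), mul_div_assoc',
    ← rpow_add hαβ]
  norm_num
  ring

end Ellipse

end

theorem hasDerivAt_one_sub_mul_rpow {k p t : ℝ} (ht : 0 < 1 - k * t) :
    HasDerivAt (fun s => (1 - k * s) ^ p) (-(k * p) * (1 - k * t) ^ (p - 1)) t := by
  have h := ((hasDerivAt_id' t).const_mul k).const_sub 1
  simpa [mul_comm, mul_left_comm] using h.rpow_const (p := p) (Or.inl ht.ne')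

theorem hasDerivAt_affineFlowScale {A t : ℝ} (ht : 0 < 1 - 4 / 3 * A * t) :
    HasDerivAt (fun s => (1 - 4 / 3 * A * s) ^ ((3 : ℝ) / 4))
      (-A * ((1 - 4 / 3 * A * t) ^ ((3 : ℝ) / 4)) ^ (-(1 : ℝ) / 3)) t := by
  convert hasDerivAt_one_sub_mul_rpow ht using 1
  rw [← rpow_mul ht.le, show (3 : ℝ) / 4 * (-1 / 3) = 3 / 4 - 1 by norm_num]
  ring

theorem one_sub_four_thirds_mul_rpow_neg_two_thirds_mul_pos {x t : ℝ} (hx : 0 < x)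
    (ht : t < 3 / 4 * x ^ ((2 : ℝ) / 3)) : 0 < 1 - 4 / 3 * x ^ (-(2 : ℝ) / 3) * t := by
  have hinv : x ^ (-(2 : ℝ) / 3) * x ^ ((2 : ℝ) / 3) = 1 := by
    rw [← rpow_add hx]; norm_num
  have := mul_lt_mul_of_pos_left ht (rpow_pos_of_pos hx (-(2 : ℝ) / 3))
  linarith

theorem rpow_neg_two_thirds_mul_rpow_neg_one_third_mul_sq_mul_rpow {r x : ℝ} (hr : 0 < r)
    (hx : 0 < x) :
    x ^ (-(2 : ℝ) / 3) * r ^ (-(1 : ℝ) / 3) * (r ^ 2 * x) ^ ((2 : ℝ) / 3) = r := by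
  calc x ^ (-(2 : ℝ) / 3) * r ^ (-(1 : ℝ) / 3) * (r ^ 2 * x) ^ ((2 : ℝ) / 3)
      = (x ^ (-(2 : ℝ) / 3) * x ^ ((2 : ℝ) / 3)) * (r ^ (-(1 : ℝ) / 3) * r ^ ((4 : ℝ) / 3)) := by
        rw [mul_rpow (by positivity) hx.le, ← rpow_natCast, ← rpow_mul hr.le]
        norm_num
        ring
    _ = r := by rw [← rpow_add hx, ← rpow_add hr]; norm_num

/-- Under the affine normal flow (velocity `κ^{1/3} N`, `N` the inward unit normal), an
ellipse remains an ellipse of the same eccentricity: the family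
`c(t,θ) = λ(t)·(a cos θ, b sin θ)` with `λ(t) = (1 − (4/3)(ab)^{-2/3} t)^{3/4}` has normal
velocity equal to `κ^{1/3}`, where `κ` is the curvature of the curve `c(t,·)`. -/
theorem ellipse_remains_ellipse_under_affine_flow (a b : ℝ) (ha : 0 < a) (hb : 0 < b)
    (lam : ℝ → ℝ)
    (hlam : ∀ t, lam t = (1 - (4 / 3) * (a * b) ^ (-(2 : ℝ) / 3) * t) ^ ((3 : ℝ) / 4))
    (dlam : ℝ → ℝ)
    (hdlam : ∀ t, dlam t = -((a * b) ^ (-(2 : ℝ) / 3)) * (lam t) ^ (-(1 : ℝ) / 3))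
    (c : ℝ → ℝ → EuclideanSpace ℝ (Fin 2))
    (hc : ∀ t θ, c t θ = lam t •
      (WithLp.toLp 2 ![a * Real.cos θ, b * Real.sin θ] : EuclideanSpace ℝ (Fin 2)))
    -- the velocity vector field `∂c/∂t = λ'(t)·(a cos θ, b sin θ)`
    (V : ℝ → ℝ → EuclideanSpace ℝ (Fin 2))
    (hV : ∀ t θ, V t θ = dlam t •
      (WithLp.toLp 2 ![a * Real.cos θ, b * Real.sin θ] : EuclideanSpace ℝ (Fin 2)))
    -- the curvature of the ellipse `c(t,·)` (semi-axes `λ(t)a`, `λ(t)b`) at parameter `θ`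
    (κ : ℝ → ℝ → ℝ)
    (hκ : ∀ t θ, κ t θ = (lam t * a) * (lam t * b) /
      ((lam t * a) ^ 2 * Real.sin θ ^ 2 + (lam t * b) ^ 2 * Real.cos θ ^ 2) ^ ((3 : ℝ) / 2))
    -- the inward unit normal of `c(t,·)` at parameter `θ`
    (N : ℝ → ℝ → EuclideanSpace ℝ (Fin 2))
    (hN : ∀ t θ, N t θ =
      (-(1 / Real.sqrt ((lam t * b) ^ 2 * Real.cos θ ^ 2 + (lam t * a) ^ 2 * Real.sin θ ^ 2))) •
        (WithLp.toLp 2 ![lam t * b * Real.cos θ, lam t * a * Real.sin θ] : EuclideanSpace ℝ (Fin 2))) :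
    ∀ t ∈ Set.Ico (0 : ℝ) ((3 / 4) * (a * b) ^ ((2 : ℝ) / 3)), ∀ θ : ℝ,
      HasDerivAt (fun s => c s θ) (V t θ) t ∧
        (inner ℝ (V t θ) (N t θ) : ℝ) = (κ t θ) ^ ((1 : ℝ) / 3) := by
  intro t ht θ
  have hab : 0 < a * b := mul_pos ha hb
  have hu := one_sub_four_thirds_mul_rpow_neg_two_thirds_mul_pos hab ht.2
  have hlam_pos : 0 < lam t := hlam t ▸ rpow_pos_of_pos hu _
  refine ⟨?_, ?_⟩
  · have hcurve : (fun s => c s θ) = fun s =>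
        (1 - 4 / 3 * (a * b) ^ (-(2 : ℝ) / 3) * s) ^ ((3 : ℝ) / 4) • Ellipse.point a b θ :=
      funext fun s => by rw [hc, hlam]; rfl
    rw [hcurve, hV, hdlam, hlam]
    exact (hasDerivAt_affineFlowScale hu).smul_const _
  · have hV' : V t θ = dlam t • Ellipse.point a b θ := hV t θ
    have hN' : N t θ = Ellipse.inwardNormal (lam t * a) (lam t * b) θ := hN t θ
    have hκ' : κ t θ = Ellipse.curvature (lam t * a) (lam t * b) θ := hκ t θ
    have hsupp := Ellipse.inner_point_inwardNormal (mul_pos hlam_pos ha) (mul_pos hlam_pos hb) θ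
    rw [Ellipse.point_mul_mul, real_inner_smul_left] at hsupp
    have hscale := rpow_neg_two_thirds_mul_rpow_neg_one_third_mul_sq_mul_rpow hlam_pos hab
    rw [show lam t ^ 2 * (a * b) = lam t * a * (lam t * b) by ring] at hscale
    rw [hV', hN', hκ', real_inner_smul_left, hdlam]
    refine mul_left_cancel₀ hlam_pos.ne' ?_
    linear_combination (-(a * b) ^ (-(2 : ℝ) / 3) * lam t ^ (-(1 : ℝ) / 3)) * hsupp +
      Ellipse.curvature (lam t * a) (lam t * b) θ ^ ((1 : ℝ) / 3) * hscale
end
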